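/- One-shot Marton bound for private messages: Let q_{Y₁Y₂|X} be a channel from a finite set 𝒳 to 𝒴₁ × 𝒴₂. For any pmf q_{U₁U₂} on finite sets 𝒰₁ × 𝒰₂, any function x : 𝒰₁ × 𝒰₂ → 𝒳, and any positive integers M₁, M₂, J₁, J₂, define q(u₁,u₂,x,y₁,y₂) = q(u₁,u₂)·1[x = x(u₁,u₂)]·q(y₁,y₂|x). Then there exists an (M₁,M₂)-code whose probability of correct decoding is at least E_q [ ( (1 + (J₁J₂)^{−1}·2^{i_q(U₁;U₂)}) · ∏_{k=1}^{2} (1 + M_k J_k·2^{−i_q(U_k;Y_k)}) )^{−1} ]. -/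

import Mathlib

/-!
Random coding with a likelihood encoder and likelihood decoders. Draw i.i.d. codebooks
`c₁ (m₁, j₁) ~ q_{U₁}` and `c₂ (m₂, j₂) ~ q_{U₂}`. To send `(m₁, m₂)`, pick `(j₁, j₂)` with
probability proportional to `2 ^ i_q(U₁;U₂)` of the two codewords and transmit `x` of them; decoder
`k` picks a codeword index with probability proportional to `2 ^ i_q(U_k;Y_k)` and outputs its
message. Given the codewords used, decoding succeeds with probability at least
`(r / G) (s₁ / D₁) (s₂ / D₂)`, where `r, s₁, s₂` are the three density ratios and `G, D₁, D₂` the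
normalizers. As `(G, D₁, D₂) ↦ 1 / (G D₁ D₂)` is convex, its mean is at least its value at the
conditional means of the normalizers, and those are at most `r + J₁J₂`, `s₁ + M₁J₁`, `s₂ + M₂J₂`
because every other term of a normalizer has mean at most one. This is exactly the summand of the
bound, and some codebook does at least as well as the average.
-/

open scoped BigOperators

/-- A pmf on a finite type, represented by a nonnegative real-valued function summing to 1. -/
structure FinPMF (α : Type) [Fintype α] where
  p : α → ℝ
  nonneg : ∀ a, 0 ≤ p a
  sum_eq_one : ∑ a, p a = 1

variable {U1 U2 X Y1 Y2 : Type}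
  [Fintype U1] [Fintype U2] [Fintype X] [Fintype Y1] [Fintype Y2]

/-- The joint pmf `q(u₁,u₂,y₁,y₂)` induced by
`q(u₁,u₂,x,y₁,y₂) = q(u₁,u₂) 1[x = x(u₁,u₂)] q(y₁,y₂|x)` after marginalizing
out the deterministic `x`. -/
noncomputable def qBC (qU : FinPMF (U1 × U2)) (f : U1 → U2 → X)
    (W : X → FinPMF (Y1 × Y2)) (u1 : U1) (u2 : U2) (y1 : Y1) (y2 : Y2) : ℝ :=
  qU.p (u1, u2) * (W (f u1 u2)).p (y1, y2)

noncomputable def mU1 (qU : FinPMF (U1 × U2)) (u1 : U1) : ℝ :=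
  ∑ u2 : U2, qU.p (u1, u2)

noncomputable def mU2 (qU : FinPMF (U1 × U2)) (u2 : U2) : ℝ :=
  ∑ u1 : U1, qU.p (u1, u2)

noncomputable def mU1Y1 (qU : FinPMF (U1 × U2)) (f : U1 → U2 → X)
    (W : X → FinPMF (Y1 × Y2)) (u1 : U1) (y1 : Y1) : ℝ :=
  ∑ u2 : U2, ∑ y2 : Y2, qBC qU f W u1 u2 y1 y2

noncomputable def mU2Y2 (qU : FinPMF (U1 × U2)) (f : U1 → U2 → X)
    (W : X → FinPMF (Y1 × Y2)) (u2 : U2) (y2 : Y2) : ℝ :=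
  ∑ u1 : U1, ∑ y1 : Y1, qBC qU f W u1 u2 y1 y2

noncomputable def mY1 (qU : FinPMF (U1 × U2)) (f : U1 → U2 → X)
    (W : X → FinPMF (Y1 × Y2)) (y1 : Y1) : ℝ :=
  ∑ u1 : U1, ∑ u2 : U2, ∑ y2 : Y2, qBC qU f W u1 u2 y1 y2

noncomputable def mY2 (qU : FinPMF (U1 × U2)) (f : U1 → U2 → X)
    (W : X → FinPMF (Y1 × Y2)) (y2 : Y2) : ℝ :=
  ∑ u1 : U1, ∑ u2 : U2, ∑ y1 : Y1, qBC qU f W u1 u2 y1 y2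

/-- Information density `i_q(U₁;U₂)`. -/
noncomputable def iU1U2 (qU : FinPMF (U1 × U2)) (u1 : U1) (u2 : U2) : ℝ :=
  Real.logb 2 (qU.p (u1, u2) / (mU1 qU u1 * mU2 qU u2))

/-- Information density `i_q(U₁;Y₁)`. -/
noncomputable def iU1Y1 (qU : FinPMF (U1 × U2)) (f : U1 → U2 → X)
    (W : X → FinPMF (Y1 × Y2)) (u1 : U1) (y1 : Y1) : ℝ :=
  Real.logb 2 (mU1Y1 qU f W u1 y1 / (mU1 qU u1 * mY1 qU f W y1))

/-- Information density `i_q(U₂;Y₂)`. -/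
noncomputable def iU2Y2 (qU : FinPMF (U1 × U2)) (f : U1 → U2 → X)
    (W : X → FinPMF (Y1 × Y2)) (u2 : U2) (y2 : Y2) : ℝ :=
  Real.logb 2 (mU2Y2 qU f W u2 y2 / (mU2 qU u2 * mY2 qU f W y2))

/-- Probability that both decoders of an `(M₁,M₂)`-code recover their private
message: messages uniform and independent, `X` generated by the stochastic encoder,
`(Y₁,Y₂)` by the channel, and message estimates by the stochastic decoders. -/
noncomputable def pCorrectBCp (M1 M2 : ℕ) (W : X → FinPMF (Y1 × Y2))
    (enc : Fin M1 × Fin M2 → FinPMF X)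
    (dec1 : Y1 → FinPMF (Fin M1)) (dec2 : Y2 → FinPMF (Fin M2)) : ℝ :=
  ∑ m1 : Fin M1, ∑ m2 : Fin M2, ∑ x : X, ∑ y1 : Y1, ∑ y2 : Y2,
    (1 / ((M1 : ℝ) * (M2 : ℝ))) * (enc (m1, m2)).p x * (W x).p (y1, y2) *
      (dec1 y1).p m1 * (dec2 y2).p m2

open Finset

lemma four_sub_le_inv_mul_mul {x y z : ℝ} (hx : 0 < x) (hy : 0 < y) (hz : 0 < z) :
    4 - x - y - z ≤ (x * y * z)⁻¹ := by
  have amgm := Real.geom_mean_le_arith_mean4_weighted (w₁ := 1 / 4) (w₂ := 1 / 4) (w₃ := 1 / 4)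
    (w₄ := 1 / 4) (by norm_num) (by norm_num) (by norm_num) (by norm_num) hx.le hy.le hz.le
    (inv_nonneg.mpr (by positivity : 0 ≤ x * y * z)) (by norm_num)
  rw [← Real.mul_rpow hx.le hy.le, ← Real.mul_rpow (by positivity) hz.le,
    ← Real.mul_rpow (by positivity) (by positivity), mul_inv_cancel₀ (by positivity),
    Real.one_rpow] at amgm
  linarith

/-- The tangent plane of the convex function `(x, y, z) ↦ 1 / (x y z)` at `(x₀, y₀, z₀)`,
weighted so that it also holds when a numerator vanishes. -/
lemma mul_div_le_div_mul_div_mul_div {a b c x y z x₀ y₀ z₀ : ℝ}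
    (ha : 0 ≤ a) (hb : 0 ≤ b) (hc : 0 ≤ c) (hax : a ≤ x) (hby : b ≤ y) (hcz : c ≤ z)
    (hx₀ : 0 < x₀) (hy₀ : 0 < y₀) (hz₀ : 0 < z₀) :
    a * b * c / (x₀ * y₀ * z₀) * (4 - x / x₀ - y / y₀ - z / z₀) ≤ a / x * (b / y) * (c / z) := by
  rcases ha.eq_or_lt with rfl | ha'
  · simp
  rcases hb.eq_or_lt with rfl | hb'
  · simp
  rcases hc.eq_or_lt with rfl | hc'
  · simp
  have hx := ha'.trans_le hax
  have hy := hb'.trans_le hby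
  have hz := hc'.trans_le hcz
  calc a * b * c / (x₀ * y₀ * z₀) * (4 - x / x₀ - y / y₀ - z / z₀)
      ≤ a * b * c / (x₀ * y₀ * z₀) * (x / x₀ * (y / y₀) * (z / z₀))⁻¹ :=
        mul_le_mul_of_nonneg_left (four_sub_le_inv_mul_mul (by positivity) (by positivity)
          (by positivity)) (by positivity)
    _ = a / x * (b / y) * (c / z) := by field_simp

lemma Finset.sum_le_add_card_mul {α : Type*} [DecidableEq α] {s : Finset α} {f : α → ℝ}
    {a : α} {b : ℝ} (ha : a ∈ s) (hb : 0 ≤ b) (hf : ∀ x ∈ s, x ≠ a → f x ≤ b) :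
    ∑ x ∈ s, f x ≤ f a + #s * b := by
  rw [← add_sum_erase s f ha]
  gcongr
  calc ∑ x ∈ s.erase a, f x ≤ #(s.erase a) • b :=
        sum_le_card_nsmul _ _ _ fun x hx => hf x (mem_of_mem_erase hx) (ne_of_mem_erase hx)
    _ ≤ #s * b := by
        rw [nsmul_eq_mul]
        exact mul_le_mul_of_nonneg_right (by exact_mod_cast card_erase_le) hb

namespace FinPMF

variable {α β : Type} [Fintype α] [Fintype β]

/-- `g` normalized to a pmf; the uniform pmf when `g` is not a nonzero nonnegative function. -/
noncomputable def normalize [Nonempty α] (g : α → ℝ) : FinPMF α :=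
  if h : (∀ a, 0 ≤ g a) ∧ 0 < ∑ a, g a then
    { p := fun a => g a / ∑ b, g b
      nonneg := fun a => div_nonneg (h.1 a) h.2.le
      sum_eq_one := by rw [← sum_div, div_self h.2.ne'] }
  else
    { p := fun _ => (Fintype.card α : ℝ)⁻¹
      nonneg := fun _ => by positivity
      sum_eq_one := by simp }

lemma div_sum_le_normalize [Nonempty α] {g : α → ℝ} (hg : ∀ a, 0 ≤ g a) (a : α) :
    g a / ∑ b, g b ≤ (normalize g).p a := by
  unfold normalize
  split_ifs with h
  · exact le_rfl
  · have hsum : ∑ b, g b = 0 :=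
      le_antisymm (not_lt.mp fun hpos => h ⟨hg, hpos⟩) (sum_nonneg fun b _ => hg b)
    rw [hsum, div_zero]
    positivity

def map [DecidableEq β] (g : α → β) (P : FinPMF α) : FinPMF β where
  p b := ∑ a with g a = b, P.p a
  nonneg b := sum_nonneg fun a _ => P.nonneg a
  sum_eq_one := by rw [sum_fiberwise, P.sum_eq_one]

lemma sum_map_mul [DecidableEq β] (g : α → β) (P : FinPMF α) (F : β → ℝ) :
    ∑ b, (P.map g).p b * F b = ∑ a, P.p a * F (g a) := by
  simp only [map, sum_mul]
  rw [← sum_fiberwise univ g fun a => P.p a * F (g a)]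
  exact sum_congr rfl fun b _ => sum_congr rfl fun a ha => by rw [(mem_filter.mp ha).2]

lemma le_map_apply [DecidableEq β] (g : α → β) (P : FinPMF α) (a : α) :
    P.p a ≤ (P.map g).p (g a) :=
  single_le_sum (f := P.p) (fun a _ => P.nonneg a) (mem_filter.mpr ⟨mem_univ a, rfl⟩)

end FinPMF

section Codebook

variable {ι U : Type} [Fintype ι] [DecidableEq ι] [Fintype U]

noncomputable def codebookMean (μ : U → ℝ) (F : (ι → U) → ℝ) : ℝ :=
  ∑ c, (∏ i, μ (c i)) * F c

variable {μ : U → ℝ}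

lemma codebookMean_add (F G : (ι → U) → ℝ) :
    codebookMean μ (fun c => F c + G c) = codebookMean μ F + codebookMean μ G := by
  simp only [codebookMean, mul_add, sum_add_distrib]

lemma codebookMean_sub (F G : (ι → U) → ℝ) :
    codebookMean μ (fun c => F c - G c) = codebookMean μ F - codebookMean μ G := by
  simp only [codebookMean, mul_sub, sum_sub_distrib]

lemma codebookMean_const_mul (a : ℝ) (F : (ι → U) → ℝ) :
    codebookMean μ (fun c => a * F c) = a * codebookMean μ F := by
  simp only [codebookMean, mul_sum]
  exact sum_congr rfl fun c _ => by ring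

lemma codebookMean_sum {κ : Type} (s : Finset κ) (F : κ → (ι → U) → ℝ) :
    codebookMean μ (fun c => ∑ k ∈ s, F k c) = ∑ k ∈ s, codebookMean μ (F k) := by
  simp only [codebookMean, mul_sum]
  exact sum_comm

lemma codebookMean_mono (hμ0 : ∀ u, 0 ≤ μ u) {F G : (ι → U) → ℝ} (h : ∀ c, F c ≤ G c) :
    codebookMean μ F ≤ codebookMean μ G :=
  sum_le_sum fun c _ => mul_le_mul_of_nonneg_left (h c) (prod_nonneg fun _ _ => hμ0 _)

lemma codebookMean_nonneg (hμ0 : ∀ u, 0 ≤ μ u) {F : (ι → U) → ℝ} (h : ∀ c, 0 ≤ F c) :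
    0 ≤ codebookMean μ F :=
  sum_nonneg fun c _ => mul_nonneg (prod_nonneg fun _ _ => hμ0 _) (h c)

lemma codebookMean_comm {ι' U' : Type} [Fintype ι'] [DecidableEq ι'] [Fintype U']
    (μ' : U' → ℝ) (F : (ι → U) → (ι' → U') → ℝ) :
    codebookMean μ (fun c => codebookMean μ' (F c)) =
      codebookMean μ' (fun c' => codebookMean μ (fun c => F c c')) := by
  simp only [codebookMean, mul_sum]
  rw [sum_comm]
  exact sum_congr rfl fun c' _ => sum_congr rfl fun c _ => by ring

lemma codebookMean_prod (g : ι → U → ℝ) :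
    codebookMean μ (fun c => ∏ i, g i (c i)) = ∏ i, ∑ u, μ u * g i u := by
  simp only [codebookMean, ← prod_mul_distrib]
  exact (Fintype.prod_sum fun i u => μ u * g i u).symm

variable (hμ : ∑ u, μ u = 1)
include hμ

lemma codebookMean_const (a : ℝ) : codebookMean μ (fun _ : ι → U => a) = a := by
  have h1 : codebookMean μ (fun _ : ι → U => (1 : ℝ)) = 1 := by
    simpa [hμ] using codebookMean_prod (ι := ι) (μ := μ) fun _ _ => 1
  simpa [h1] using codebookMean_const_mul (μ := μ) a fun _ : ι → U => 1

lemma codebookMean_apply (i : ι) (g : U → ℝ) :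
    codebookMean μ (fun c => g (c i)) = ∑ u, μ u * g u := by
  simpa [mul_ite, sum_ite_irrel, hμ] using
    codebookMean_prod (μ := μ) fun j u => if j = i then g u else 1

lemma codebookMean_apply_mul_apply {i j : ι} (hij : i ≠ j) (g h : U → ℝ) :
    codebookMean μ (fun c => g (c i) * h (c j)) = (∑ u, μ u * g u) * ∑ u, μ u * h u := by
  have factor (k : ι) : ∑ u, μ u * ((if k = i then g u else 1) * (if k = j then h u else 1)) =
      (if k = i then ∑ u, μ u * g u else 1) * (if k = j then ∑ u, μ u * h u else 1) := by
    by_cases hki : k = i <;> by_cases hkj : k = j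
    · exact absurd (hki.symm.trans hkj) hij
    all_goals simp [hki, hkj, hij, hij.symm, hμ]
  have codeword (c : ι → U) :
      ∏ k, (if k = i then g (c k) else 1) * (if k = j then h (c k) else 1) = g (c i) * h (c j) := by
    rw [prod_mul_distrib, Fintype.prod_ite_eq', Fintype.prod_ite_eq']
  simpa only [codeword, factor, prod_mul_distrib, Fintype.prod_ite_eq'] using
    codebookMean_prod (μ := μ) fun k u => (if k = i then g u else 1) * (if k = j then h u else 1)

lemma codebookMean_apply_mul_apply_le (hμ0 : ∀ u, 0 ≤ μ u) {i j : ι} (hij : i ≠ j)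
    {g h : U → ℝ} (hg : ∀ u, 0 ≤ g u) (hh : ∑ u, μ u * h u ≤ 1) :
    codebookMean μ (fun c => g (c i) * h (c j)) ≤ codebookMean μ (fun c => g (c i)) := by
  rw [codebookMean_apply_mul_apply hμ hij, codebookMean_apply hμ]
  exact mul_le_of_le_one_right (sum_nonneg fun u _ => mul_nonneg (hμ0 u) (hg u)) hh

/-- Given the codeword `c i`, the other `card ι - 1` terms of `∑ j, s (c j)` have mean at most
one each. -/
lemma codebookMean_apply_mul_sum_le (hμ0 : ∀ u, 0 ≤ μ u) (i : ι) {g s : U → ℝ}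
    (hg : ∀ u, 0 ≤ g u) (hs : ∑ u, μ u * s u ≤ 1) :
    codebookMean μ (fun c => g (c i) * ∑ j, s (c j)) ≤
      codebookMean μ (fun c => g (c i) * (s (c i) + Fintype.card ι)) := by
  have hmean : 0 ≤ codebookMean μ (fun c => g (c i)) :=
    codebookMean_nonneg hμ0 fun c => hg (c i)
  calc codebookMean μ (fun c => g (c i) * ∑ j, s (c j))
      = ∑ j, codebookMean μ (fun c => g (c i) * s (c j)) := by
        simp only [mul_sum, codebookMean_sum]
    _ ≤ codebookMean μ (fun c => g (c i) * s (c i)) +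
          Fintype.card ι * codebookMean μ (fun c => g (c i)) :=
        sum_le_add_card_mul (mem_univ i) hmean fun j _ hji =>
          codebookMean_apply_mul_apply_le hμ hμ0 (Ne.symm hji) hg hs
    _ = codebookMean μ (fun c => g (c i) * (s (c i) + Fintype.card ι)) := by
        rw [← codebookMean_const_mul, ← codebookMean_add]
        simp only [mul_add, mul_comm]

lemma exists_le_of_le_codebookMean (hμ0 : ∀ u, 0 ≤ μ u) {F : (ι → U) → ℝ} {a : ℝ}
    (h : a ≤ codebookMean μ F) : ∃ c, a ≤ F c := by
  have : Nonempty U := by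
    by_contra hU
    rw [not_nonempty_iff] at hU
    simp at hμ
  obtain ⟨c₀, hc₀⟩ := Finite.exists_max F
  refine ⟨c₀, h.trans ?_⟩
  calc codebookMean μ F ≤ codebookMean μ (fun _ => F c₀) := codebookMean_mono hμ0 hc₀
    _ = F c₀ := codebookMean_const hμ _

end Codebook

section TwoCodebooks

variable {ι₁ ι₂ V₁ V₂ : Type} [Fintype ι₁] [DecidableEq ι₁] [Fintype ι₂] [DecidableEq ι₂]
  [Fintype V₁] [Fintype V₂] {μ₁ : V₁ → ℝ} {μ₂ : V₂ → ℝ}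

lemma codebookMean_codebookMean_apply (hμ₁ : ∑ u, μ₁ u = 1) (hμ₂ : ∑ v, μ₂ v = 1)
    (i₁ : ι₁) (i₂ : ι₂) (Φ : V₁ → V₂ → ℝ) :
    codebookMean μ₁ (fun c₁ => codebookMean μ₂ fun c₂ => Φ (c₁ i₁) (c₂ i₂)) =
      ∑ u, μ₁ u * ∑ v, μ₂ v * Φ u v := by
  simp only [codebookMean_apply (ι := ι₂) hμ₂, codebookMean_apply hμ₁ i₁ fun u => ∑ v, μ₂ v * Φ u v]

variable (hμ₁0 : ∀ u, 0 ≤ μ₁ u) (hμ₂0 : ∀ v, 0 ≤ μ₂ v)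
include hμ₁0 hμ₂0

lemma codebookMean_codebookMean_mul_le_of_ne_left (hμ₁ : ∑ u, μ₁ u = 1) {i₁ j₁ : ι₁}
    (h : i₁ ≠ j₁) (i₂ j₂ : ι₂) {Ψ r : V₁ → V₂ → ℝ} (hΨ : ∀ u v, 0 ≤ Ψ u v)
    (hr : ∀ v, ∑ u, μ₁ u * r u v ≤ 1) :
    codebookMean μ₁ (fun c₁ => codebookMean μ₂ fun c₂ => Ψ (c₁ i₁) (c₂ i₂) * r (c₁ j₁) (c₂ j₂)) ≤
      codebookMean μ₁ (fun c₁ => codebookMean μ₂ fun c₂ => Ψ (c₁ i₁) (c₂ i₂)) := by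
  rw [codebookMean_comm (μ := μ₁) μ₂, codebookMean_comm (μ := μ₁) μ₂]
  exact codebookMean_mono hμ₂0 fun _ =>
    codebookMean_apply_mul_apply_le hμ₁ hμ₁0 h (fun u => hΨ u _) (hr _)

lemma codebookMean_codebookMean_mul_le_of_ne_right (hμ₂ : ∑ v, μ₂ v = 1) (i₁ j₁ : ι₁)
    {i₂ j₂ : ι₂} (h : i₂ ≠ j₂) {Ψ r : V₁ → V₂ → ℝ} (hΨ : ∀ u v, 0 ≤ Ψ u v)
    (hr : ∀ u, ∑ v, μ₂ v * r u v ≤ 1) :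
    codebookMean μ₁ (fun c₁ => codebookMean μ₂ fun c₂ => Ψ (c₁ i₁) (c₂ i₂) * r (c₁ j₁) (c₂ j₂)) ≤
      codebookMean μ₁ (fun c₁ => codebookMean μ₂ fun c₂ => Ψ (c₁ i₁) (c₂ i₂)) :=
  codebookMean_mono hμ₁0 fun _ =>
    codebookMean_apply_mul_apply_le hμ₂ hμ₂0 h (hΨ _) (hr _)

lemma codebookMean_codebookMean_apply_mul_sum_le_left (hμ₁ : ∑ u, μ₁ u = 1) (i₁ : ι₁)
    (i₂ : ι₂) {Ψ : V₁ → V₂ → ℝ} {s : V₁ → ℝ} (hΨ : ∀ u v, 0 ≤ Ψ u v)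
    (hs : ∑ u, μ₁ u * s u ≤ 1) :
    codebookMean μ₁ (fun c₁ => codebookMean μ₂ fun c₂ => Ψ (c₁ i₁) (c₂ i₂) * ∑ i, s (c₁ i)) ≤
      codebookMean μ₁ (fun c₁ => codebookMean μ₂ fun c₂ =>
        Ψ (c₁ i₁) (c₂ i₂) * (s (c₁ i₁) + Fintype.card ι₁)) := by
  rw [codebookMean_comm (μ := μ₁) μ₂, codebookMean_comm (μ := μ₁) μ₂]
  exact codebookMean_mono hμ₂0 fun _ =>
    codebookMean_apply_mul_sum_le hμ₁ hμ₁0 i₁ (fun u => hΨ u _) hs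

lemma codebookMean_codebookMean_apply_mul_sum_le_right (hμ₂ : ∑ v, μ₂ v = 1) (i₁ : ι₁)
    (i₂ : ι₂) {Ψ : V₁ → V₂ → ℝ} {s : V₂ → ℝ} (hΨ : ∀ u v, 0 ≤ Ψ u v)
    (hs : ∑ v, μ₂ v * s v ≤ 1) :
    codebookMean μ₁ (fun c₁ => codebookMean μ₂ fun c₂ => Ψ (c₁ i₁) (c₂ i₂) * ∑ i, s (c₂ i)) ≤
      codebookMean μ₁ (fun c₁ => codebookMean μ₂ fun c₂ =>
        Ψ (c₁ i₁) (c₂ i₂) * (s (c₂ i₂) + Fintype.card ι₂)) :=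
  codebookMean_mono hμ₁0 fun _ => codebookMean_apply_mul_sum_le hμ₂ hμ₂0 i₂ (hΨ _) hs

lemma codebookMean_codebookMean_mul_sum_sum_le (hμ₁ : ∑ u, μ₁ u = 1) (hμ₂ : ∑ v, μ₂ v = 1)
    {κ₁ κ₂ : Type} [Fintype κ₁] [Fintype κ₂] {e₁ : κ₁ → ι₁} {e₂ : κ₂ → ι₂}
    (he₁ : e₁.Injective) (he₂ : e₂.Injective) (j₁ : κ₁) (j₂ : κ₂) {Ψ r : V₁ → V₂ → ℝ}
    (hΨ : ∀ u v, 0 ≤ Ψ u v) (hr₁ : ∀ v, ∑ u, μ₁ u * r u v ≤ 1)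
    (hr₂ : ∀ u, ∑ v, μ₂ v * r u v ≤ 1) :
    codebookMean μ₁ (fun c₁ => codebookMean μ₂ fun c₂ =>
        Ψ (c₁ (e₁ j₁)) (c₂ (e₂ j₂)) * ∑ k₁, ∑ k₂, r (c₁ (e₁ k₁)) (c₂ (e₂ k₂))) ≤
      codebookMean μ₁ (fun c₁ => codebookMean μ₂ fun c₂ =>
        Ψ (c₁ (e₁ j₁)) (c₂ (e₂ j₂)) *
          (r (c₁ (e₁ j₁)) (c₂ (e₂ j₂)) + Fintype.card κ₁ * Fintype.card κ₂)) := by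
  classical
  set mean : (V₁ → V₂ → ℝ) → (κ₁ × κ₂) → ℝ := fun F k => codebookMean μ₁ fun c₁ =>
    codebookMean μ₂ fun c₂ => Ψ (c₁ (e₁ j₁)) (c₂ (e₂ j₂)) * F (c₁ (e₁ k.1)) (c₂ (e₂ k.2)) with hmean
  have hΨmean : 0 ≤ mean (fun _ _ => 1) (j₁, j₂) :=
    codebookMean_nonneg hμ₁0 fun _ => codebookMean_nonneg hμ₂0 fun _ => by simpa using hΨ _ _
  calc codebookMean μ₁ (fun c₁ => codebookMean μ₂ fun c₂ =>
        Ψ (c₁ (e₁ j₁)) (c₂ (e₂ j₂)) * ∑ k₁, ∑ k₂, r (c₁ (e₁ k₁)) (c₂ (e₂ k₂)))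
      = ∑ k, mean r k := by
        simp only [hmean, mul_sum, codebookMean_sum, Fintype.sum_prod_type]
    _ ≤ mean r (j₁, j₂) + #(univ : Finset (κ₁ × κ₂)) * mean (fun _ _ => 1) (j₁, j₂) := by
        refine sum_le_add_card_mul (mem_univ _) hΨmean fun ⟨k₁, k₂⟩ _ hk => ?_
        simp only [hmean, mul_one]
        by_cases h₁ : k₁ = j₁
        · subst h₁
          have h₂ : e₂ j₂ ≠ e₂ k₂ := he₂.ne fun h => hk (by rw [h])
          exact codebookMean_codebookMean_mul_le_of_ne_right hμ₁0 hμ₂0 hμ₂ _ _ h₂ hΨ hr₂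
        · exact codebookMean_codebookMean_mul_le_of_ne_left hμ₁0 hμ₂0 hμ₁
            (he₁.ne (Ne.symm h₁)) _ _ hΨ hr₁
    _ = _ := by
        simp only [hmean, card_univ, Fintype.card_prod, Nat.cast_mul, mul_one, mul_add,
          ← codebookMean_const_mul, ← codebookMean_add]
        simp only [mul_comm]

/-- Each normalizer has conditional mean at most `r + card κ₁ card κ₂`, `s₁ + card ι₁`,
`s₂ + card ι₂` given the transmitted codewords, so the tangent plane of `1 / (G D₁ D₂)` there has
mean at least one. -/
lemma codebookMean_codebookMean_le_mul_tangent (hμ₁ : ∑ u, μ₁ u = 1) (hμ₂ : ∑ v, μ₂ v = 1)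
    {κ₁ κ₂ : Type} [Fintype κ₁] [Fintype κ₂] {e₁ : κ₁ → ι₁} {e₂ : κ₂ → ι₂}
    (he₁ : e₁.Injective) (he₂ : e₂.Injective) (j₁ : κ₁) (j₂ : κ₂) {Φ r : V₁ → V₂ → ℝ}
    {s₁ : V₁ → ℝ} {s₂ : V₂ → ℝ} (hΦ : ∀ u v, 0 ≤ Φ u v) (hr : ∀ u v, 0 ≤ r u v)
    (hs₁ : ∀ u, 0 ≤ s₁ u) (hs₂ : ∀ v, 0 ≤ s₂ v) (hr₁ : ∀ v, ∑ u, μ₁ u * r u v ≤ 1)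
    (hr₂ : ∀ u, ∑ v, μ₂ v * r u v ≤ 1) (hs₁μ : ∑ u, μ₁ u * s₁ u ≤ 1)
    (hs₂μ : ∑ v, μ₂ v * s₂ v ≤ 1) :
    codebookMean μ₁ (fun c₁ => codebookMean μ₂ fun c₂ => Φ (c₁ (e₁ j₁)) (c₂ (e₂ j₂))) ≤
      codebookMean μ₁ (fun c₁ => codebookMean μ₂ fun c₂ => Φ (c₁ (e₁ j₁)) (c₂ (e₂ j₂)) *
        (4 - (∑ k₁, ∑ k₂, r (c₁ (e₁ k₁)) (c₂ (e₂ k₂))) /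
            (r (c₁ (e₁ j₁)) (c₂ (e₂ j₂)) + Fintype.card κ₁ * Fintype.card κ₂)
          - (∑ i, s₁ (c₁ i)) / (s₁ (c₁ (e₁ j₁)) + Fintype.card ι₁)
          - (∑ i, s₂ (c₂ i)) / (s₂ (c₂ (e₂ j₂)) + Fintype.card ι₂))) := by
  have : Nonempty κ₁ := ⟨j₁⟩
  have : Nonempty κ₂ := ⟨j₂⟩
  have : Nonempty ι₁ := ⟨e₁ j₁⟩
  have : Nonempty ι₂ := ⟨e₂ j₂⟩
  have hg u v : 0 < r u v + Fintype.card κ₁ * Fintype.card κ₂ :=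
    add_pos_of_nonneg_of_pos (hr u v) (by positivity)
  have hd₁ u : 0 < s₁ u + Fintype.card ι₁ := add_pos_of_nonneg_of_pos (hs₁ u) (by positivity)
  have hd₂ v : 0 < s₂ v + Fintype.card ι₂ := add_pos_of_nonneg_of_pos (hs₂ v) (by positivity)
  have expand (φ G g D₁ d₁ D₂ d₂ : ℝ) :
      φ * (4 - G / g - D₁ / d₁ - D₂ / d₂) = 4 * φ - φ / g * G - φ / d₁ * D₁ - φ / d₂ * D₂ := by
    ring
  have hG := codebookMean_codebookMean_mul_sum_sum_le hμ₁0 hμ₂0 hμ₁ hμ₂ he₁ he₂ j₁ j₂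
    (fun u v => div_nonneg (hΦ u v) (hg u v).le) hr₁ hr₂
  have hD₁ := codebookMean_codebookMean_apply_mul_sum_le_left hμ₁0 hμ₂0 hμ₁ (e₁ j₁) (e₂ j₂)
    (fun u v => div_nonneg (hΦ u v) (hd₁ u).le) hs₁μ
  have hD₂ := codebookMean_codebookMean_apply_mul_sum_le_right hμ₁0 hμ₂0 hμ₂ (e₁ j₁) (e₂ j₂)
    (fun u v => div_nonneg (hΦ u v) (hd₂ v).le) hs₂μ
  simp only [div_mul_cancel₀ _ (hg _ _).ne', div_mul_cancel₀ _ (hd₁ _).ne',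
    div_mul_cancel₀ _ (hd₂ _).ne'] at hG hD₁ hD₂
  simp only [expand, codebookMean_sub, codebookMean_const_mul]
  linarith

/-- Jensen's inequality for the convex map `(G, D₁, D₂) ↦ 1 / (G D₁ D₂)` of the three
normalizers. -/
lemma sum_le_codebookMean_codebookMean_div_mul_div_mul_div (hμ₁ : ∑ u, μ₁ u = 1)
    (hμ₂ : ∑ v, μ₂ v = 1) {κ₁ κ₂ : Type} [Fintype κ₁] [Fintype κ₂] {e₁ : κ₁ → ι₁}
    {e₂ : κ₂ → ι₂} (he₁ : e₁.Injective) (he₂ : e₂.Injective) (j₁ : κ₁) (j₂ : κ₂)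
    {w r : V₁ → V₂ → ℝ} {s₁ : V₁ → ℝ} {s₂ : V₂ → ℝ} (hw : ∀ u v, 0 ≤ w u v)
    (hr : ∀ u v, 0 ≤ r u v) (hs₁ : ∀ u, 0 ≤ s₁ u) (hs₂ : ∀ v, 0 ≤ s₂ v)
    (hr₁ : ∀ v, ∑ u, μ₁ u * r u v ≤ 1) (hr₂ : ∀ u, ∑ v, μ₂ v * r u v ≤ 1)
    (hs₁μ : ∑ u, μ₁ u * s₁ u ≤ 1) (hs₂μ : ∑ v, μ₂ v * s₂ v ≤ 1) :
    ∑ u, μ₁ u * ∑ v, μ₂ v * (w u v * (r u v * s₁ u * s₂ v /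
        ((r u v + Fintype.card κ₁ * Fintype.card κ₂) * (s₁ u + Fintype.card ι₁) *
          (s₂ v + Fintype.card ι₂)))) ≤
      codebookMean μ₁ (fun c₁ => codebookMean μ₂ fun c₂ =>
        w (c₁ (e₁ j₁)) (c₂ (e₂ j₂)) *
          (r (c₁ (e₁ j₁)) (c₂ (e₂ j₂)) / (∑ k₁, ∑ k₂, r (c₁ (e₁ k₁)) (c₂ (e₂ k₂))) *
            (s₁ (c₁ (e₁ j₁)) / ∑ i, s₁ (c₁ i)) * (s₂ (c₂ (e₂ j₂)) / ∑ i, s₂ (c₂ i)))) := by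
  have : Nonempty κ₁ := ⟨j₁⟩
  have : Nonempty κ₂ := ⟨j₂⟩
  have : Nonempty ι₁ := ⟨e₁ j₁⟩
  have : Nonempty ι₂ := ⟨e₂ j₂⟩
  rw [← codebookMean_codebookMean_apply hμ₁ hμ₂ (e₁ j₁) (e₂ j₂)]
  refine (codebookMean_codebookMean_le_mul_tangent hμ₁0 hμ₂0 hμ₁ hμ₂ he₁ he₂ j₁ j₂
    (Φ := fun u v => w u v * (r u v * s₁ u * s₂ v /
      ((r u v + Fintype.card κ₁ * Fintype.card κ₂) * (s₁ u + Fintype.card ι₁) *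
        (s₂ v + Fintype.card ι₂)))) (fun u v => ?_) hr hs₁ hs₂ hr₁ hr₂ hs₁μ hs₂μ).trans
    (codebookMean_mono hμ₁0 fun c₁ => codebookMean_mono hμ₂0 fun c₂ => ?_)
  · have := hr u v
    have := hs₁ u
    have := hs₂ v
    have := hw u v
    positivity
  · rw [mul_assoc]
    refine mul_le_mul_of_nonneg_left (mul_div_le_div_mul_div_mul_div (hr _ _) (hs₁ _) (hs₂ _)
      ?_ ?_ ?_ (by have := hr (c₁ (e₁ j₁)) (c₂ (e₂ j₂)); positivity)
      (by have := hs₁ (c₁ (e₁ j₁)); positivity) (by have := hs₂ (c₂ (e₂ j₂)); positivity))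
      (hw _ _)
    · exact (single_le_sum (f := fun k₂ => r (c₁ (e₁ j₁)) (c₂ (e₂ k₂))) (fun k₂ _ => hr _ _)
        (mem_univ j₂)).trans
          (single_le_sum (f := fun k₁ => ∑ k₂, r (c₁ (e₁ k₁)) (c₂ (e₂ k₂)))
            (fun k₁ _ => sum_nonneg fun k₂ _ => hr _ _) (mem_univ j₁))
    · exact single_le_sum (fun i _ => hs₁ (c₁ i)) (mem_univ _)
    · exact single_le_sum (fun i _ => hs₂ (c₂ i)) (mem_univ _)

end TwoCodebooks

section LikelihoodCode

variable {V₁ V₂ α₁ α₂ κ₁ κ₂ : Type} [Fintype α₁] [Fintype α₂] [Fintype κ₁] [Fintype κ₂]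
  [Nonempty κ₁] [Nonempty κ₂]

noncomputable def likelihoodEncoder [DecidableEq X] (r : V₁ → V₂ → ℝ) (f : V₁ → V₂ → X)
    (c₁ : α₁ × κ₁ → V₁) (c₂ : α₂ × κ₂ → V₂) (a : α₁ × α₂) : FinPMF X :=
  (FinPMF.normalize fun j : κ₁ × κ₂ => r (c₁ (a.1, j.1)) (c₂ (a.2, j.2))).map
    fun j => f (c₁ (a.1, j.1)) (c₂ (a.2, j.2))

noncomputable def likelihoodDecoder {V Y α κ : Type} [Fintype α] [DecidableEq α] [Nonempty α]
    [Fintype κ] [Nonempty κ] (s : V → Y → ℝ) (c : α × κ → V) (y : Y) : FinPMF α :=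
  (FinPMF.normalize fun i => s (c i) y).map Prod.fst

lemma div_sum_le_likelihoodDecoder {V Y α κ : Type} [Fintype α] [DecidableEq α] [Nonempty α]
    [Fintype κ] [Nonempty κ] {s : V → Y → ℝ} (hs : ∀ v y, 0 ≤ s v y) (c : α × κ → V) (y : Y)
    (a : α) (j : κ) :
    s (c (a, j)) y / ∑ i, s (c i) y ≤ (likelihoodDecoder s c y).p a :=
  (FinPMF.div_sum_le_normalize (fun i => hs (c i) y) (a, j)).trans (FinPMF.le_map_apply _ _ _)

variable [DecidableEq α₁] [DecidableEq α₂] [Nonempty α₁] [Nonempty α₂]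

/-- The likelihood code decodes correctly at least when both decoders pick the codewords that the
encoder used. -/
lemma sum_le_likelihoodCode_success [DecidableEq X] {r : V₁ → V₂ → ℝ} {s₁ : V₁ → Y1 → ℝ}
    {s₂ : V₂ → Y2 → ℝ} (hr : ∀ u v, 0 ≤ r u v) (hs₁ : ∀ u y, 0 ≤ s₁ u y)
    (hs₂ : ∀ v y, 0 ≤ s₂ v y) (f : V₁ → V₂ → X) (W : X → FinPMF (Y1 × Y2))
    (c₁ : α₁ × κ₁ → V₁) (c₂ : α₂ × κ₂ → V₂) (a₁ : α₁) (a₂ : α₂) :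
    ∑ j₁, ∑ j₂, ∑ y₁, ∑ y₂, (W (f (c₁ (a₁, j₁)) (c₂ (a₂, j₂)))).p (y₁, y₂) *
        (r (c₁ (a₁, j₁)) (c₂ (a₂, j₂)) / (∑ k₁, ∑ k₂, r (c₁ (a₁, k₁)) (c₂ (a₂, k₂))) *
          (s₁ (c₁ (a₁, j₁)) y₁ / ∑ i, s₁ (c₁ i) y₁) * (s₂ (c₂ (a₂, j₂)) y₂ / ∑ i, s₂ (c₂ i) y₂)) ≤
      ∑ x, ∑ y₁, ∑ y₂, (likelihoodEncoder r f c₁ c₂ (a₁, a₂)).p x * (W x).p (y₁, y₂) *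
        (likelihoodDecoder s₁ c₁ y₁).p a₁ * (likelihoodDecoder s₂ c₂ y₂).p a₂ := by
  set u : κ₁ → V₁ := fun j₁ => c₁ (a₁, j₁)
  set v : κ₂ → V₂ := fun j₂ => c₂ (a₂, j₂)
  set P := FinPMF.normalize fun j : κ₁ × κ₂ => r (u j.1) (v j.2)
  set success : X → ℝ := fun x => ∑ y₁, ∑ y₂, (W x).p (y₁, y₂) *
    ((likelihoodDecoder s₁ c₁ y₁).p a₁ * (likelihoodDecoder s₂ c₂ y₂).p a₂)
  calc _ = ∑ j₁, ∑ j₂, r (u j₁) (v j₂) / (∑ k₁, ∑ k₂, r (u k₁) (v k₂)) *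
        ∑ y₁, ∑ y₂, (W (f (u j₁) (v j₂))).p (y₁, y₂) *
          ((s₁ (u j₁) y₁ / ∑ i, s₁ (c₁ i) y₁) * (s₂ (v j₂) y₂ / ∑ i, s₂ (c₂ i) y₂)) := by
        simp only [mul_sum]
        exact sum_congr rfl fun _ _ => sum_congr rfl fun _ _ => sum_congr rfl fun _ _ =>
          sum_congr rfl fun _ _ => by ring
    _ ≤ ∑ j₁, ∑ j₂, P.p (j₁, j₂) * success (f (u j₁) (v j₂)) := by
        refine sum_le_sum fun j₁ _ => sum_le_sum fun j₂ _ => ?_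
        have hP := FinPMF.div_sum_le_normalize (fun j : κ₁ × κ₂ => hr (u j.1) (v j.2)) (j₁, j₂)
        rw [Fintype.sum_prod_type] at hP
        refine mul_le_mul hP (sum_le_sum fun y₁ _ => sum_le_sum fun y₂ _ => ?_)
          (sum_nonneg fun _ _ => sum_nonneg fun _ _ => mul_nonneg ((W _).nonneg _)
            (mul_nonneg (div_nonneg (hs₁ _ _) (sum_nonneg fun _ _ => hs₁ _ _))
              (div_nonneg (hs₂ _ _) (sum_nonneg fun _ _ => hs₂ _ _)))) (P.nonneg _)
        exact mul_le_mul_of_nonneg_left (mul_le_mul (div_sum_le_likelihoodDecoder hs₁ c₁ y₁ a₁ j₁)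
          (div_sum_le_likelihoodDecoder hs₂ c₂ y₂ a₂ j₂)
          (div_nonneg (hs₂ _ _) (sum_nonneg fun _ _ => hs₂ _ _))
          ((likelihoodDecoder _ _ _).nonneg _)) ((W _).nonneg _)
    _ = ∑ x, (likelihoodEncoder r f c₁ c₂ (a₁, a₂)).p x * success x := by
        rw [likelihoodEncoder, FinPMF.sum_map_mul, Fintype.sum_prod_type]
    _ = _ := by
        simp only [success, mul_sum]
        exact sum_congr rfl fun _ _ => sum_congr rfl fun _ _ => sum_congr rfl fun _ _ => by ring

end LikelihoodCode

lemma Finset.sum_comm₂₂ {α β γ δ : Type} [Fintype α] [Fintype β] [Fintype γ] [Fintype δ]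
    (F : α → β → γ → δ → ℝ) :
    ∑ a, ∑ b, ∑ c, ∑ d, F a b c d = ∑ c, ∑ d, ∑ a, ∑ b, F a b c d :=
  calc _ = ∑ a, ∑ c, ∑ b, ∑ d, F a b c d := sum_congr rfl fun _ _ => sum_comm
    _ = ∑ c, ∑ a, ∑ b, ∑ d, F a b c d := sum_comm
    _ = ∑ c, ∑ a, ∑ d, ∑ b, F a b c d :=
        sum_congr rfl fun _ _ => sum_congr rfl fun _ _ => sum_comm
    _ = _ := sum_congr rfl fun _ _ => sum_comm

lemma sum_mul_div_mul_le_one {α : Type} [Fintype α] {m q : α → ℝ} {d : ℝ}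
    (hq : ∀ a, 0 ≤ q a) (hd : ∑ a, q a = d) : ∑ a, m a * (q a / (m a * d)) ≤ 1 := by
  have hd0 : 0 ≤ d := hd ▸ sum_nonneg fun a _ => hq a
  calc ∑ a, m a * (q a / (m a * d)) ≤ ∑ a, q a / d := sum_le_sum fun a _ => by
        rcases eq_or_ne (m a) 0 with hm | hm
        · rw [hm, zero_mul]
          exact div_nonneg (hq a) hd0
        · rw [mul_div_assoc', mul_div_mul_left _ _ hm]
    _ = d / d := by rw [← sum_div, hd]
    _ ≤ 1 := div_self_le_one d

section InformationDensities

omit [Fintype X]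

variable (qU : FinPMF (U1 × U2)) (f : U1 → U2 → X) (W : X → FinPMF (Y1 × Y2))

noncomputable def ratioU1U2 (u1 : U1) (u2 : U2) : ℝ :=
  qU.p (u1, u2) / (mU1 qU u1 * mU2 qU u2)

noncomputable def ratioU1Y1 (u1 : U1) (y1 : Y1) : ℝ :=
  mU1Y1 qU f W u1 y1 / (mU1 qU u1 * mY1 qU f W y1)

noncomputable def ratioU2Y2 (u2 : U2) (y2 : Y2) : ℝ :=
  mU2Y2 qU f W u2 y2 / (mU2 qU u2 * mY2 qU f W y2)

lemma qBC_nonneg (u1 : U1) (u2 : U2) (y1 : Y1) (y2 : Y2) : 0 ≤ qBC qU f W u1 u2 y1 y2 :=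
  mul_nonneg (qU.nonneg _) ((W _).nonneg _)

lemma mU1_nonneg (u1 : U1) : 0 ≤ mU1 qU u1 := sum_nonneg fun _ _ => qU.nonneg _

lemma mU2_nonneg (u2 : U2) : 0 ≤ mU2 qU u2 := sum_nonneg fun _ _ => qU.nonneg _

lemma sum_mU1 : ∑ u1, mU1 qU u1 = 1 := by
  rw [← qU.sum_eq_one, Fintype.sum_prod_type]
  rfl

lemma sum_mU2 : ∑ u2, mU2 qU u2 = 1 := by
  rw [← qU.sum_eq_one, Fintype.sum_prod_type, sum_comm]
  rfl

lemma ratioU1U2_nonneg (u1 : U1) (u2 : U2) : 0 ≤ ratioU1U2 qU u1 u2 :=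
  div_nonneg (qU.nonneg _) (mul_nonneg (mU1_nonneg qU u1) (mU2_nonneg qU u2))

lemma ratioU1Y1_nonneg (u1 : U1) (y1 : Y1) : 0 ≤ ratioU1Y1 qU f W u1 y1 :=
  div_nonneg (sum_nonneg fun _ _ => sum_nonneg fun _ _ => qBC_nonneg qU f W _ _ _ _)
    (mul_nonneg (mU1_nonneg qU u1)
      (sum_nonneg fun _ _ => sum_nonneg fun _ _ => sum_nonneg fun _ _ => qBC_nonneg qU f W _ _ _ _))

lemma ratioU2Y2_nonneg (u2 : U2) (y2 : Y2) : 0 ≤ ratioU2Y2 qU f W u2 y2 :=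
  div_nonneg (sum_nonneg fun _ _ => sum_nonneg fun _ _ => qBC_nonneg qU f W _ _ _ _)
    (mul_nonneg (mU2_nonneg qU u2)
      (sum_nonneg fun _ _ => sum_nonneg fun _ _ => sum_nonneg fun _ _ => qBC_nonneg qU f W _ _ _ _))

lemma sum_mU1_mul_ratioU1U2_le_one (u2 : U2) : ∑ u1, mU1 qU u1 * ratioU1U2 qU u1 u2 ≤ 1 :=
  sum_mul_div_mul_le_one (fun _ => qU.nonneg _) rfl

lemma sum_mU2_mul_ratioU1U2_le_one (u1 : U1) : ∑ u2, mU2 qU u2 * ratioU1U2 qU u1 u2 ≤ 1 := by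
  simp only [ratioU1U2, mul_comm (mU1 qU u1)]
  exact sum_mul_div_mul_le_one (fun _ => qU.nonneg _) rfl

lemma sum_mU1_mul_ratioU1Y1_le_one (y1 : Y1) : ∑ u1, mU1 qU u1 * ratioU1Y1 qU f W u1 y1 ≤ 1 :=
  sum_mul_div_mul_le_one (fun _ => sum_nonneg fun _ _ => sum_nonneg fun _ _ =>
    qBC_nonneg qU f W _ _ _ _) rfl

lemma sum_mU2_mul_ratioU2Y2_le_one (y2 : Y2) : ∑ u2, mU2 qU u2 * ratioU2Y2 qU f W u2 y2 ≤ 1 :=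
  sum_mul_div_mul_le_one (fun _ => sum_nonneg fun _ _ => sum_nonneg fun _ _ =>
    qBC_nonneg qU f W _ _ _ _) sum_comm

lemma ratios_pos_of_qBC_pos {u1 : U1} {u2 : U2} {y1 : Y1} {y2 : Y2}
    (h : 0 < qBC qU f W u1 u2 y1 y2) :
    0 < ratioU1U2 qU u1 u2 ∧ 0 < ratioU1Y1 qU f W u1 y1 ∧ 0 < ratioU2Y2 qU f W u2 y2 := by
  have hq := qBC_nonneg qU f W
  have hp : 0 < qU.p (u1, u2) := pos_of_mul_pos_left h ((W _).nonneg _)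
  have hm1 : 0 < mU1 qU u1 := sum_pos' (fun _ _ => qU.nonneg _) ⟨u2, mem_univ _, hp⟩
  have hm2 : 0 < mU2 qU u2 := sum_pos' (fun _ _ => qU.nonneg _) ⟨u1, mem_univ _, hp⟩
  have hsum {ι : Type} [Fintype ι] {g : ι → ℝ} (hg : ∀ i, 0 ≤ g i) {i : ι} (hi : 0 < g i) :
      0 < ∑ i, g i := sum_pos' (fun i _ => hg i) ⟨i, mem_univ _, hi⟩
  refine ⟨div_pos hp (mul_pos hm1 hm2), div_pos ?_ (mul_pos hm1 ?_),
    div_pos ?_ (mul_pos hm2 ?_)⟩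
  · exact hsum (fun _ => sum_nonneg fun _ _ => hq _ _ _ _) (hsum (hq _ _ _) h)
  · exact hsum (fun _ => sum_nonneg fun _ _ => sum_nonneg fun _ _ => hq _ _ _ _)
      (hsum (fun _ => sum_nonneg fun _ _ => hq _ _ _ _) (hsum (hq _ _ _) h))
  · exact hsum (fun _ => sum_nonneg fun _ _ => hq _ _ _ _) (hsum (fun _ => hq _ _ _ _) h)
  · exact hsum (fun _ => sum_nonneg fun _ _ => sum_nonneg fun _ _ => hq _ _ _ _)
      (hsum (fun _ => sum_nonneg fun _ _ => hq _ _ _ _) (hsum (fun _ => hq _ _ _ _) h))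

lemma mU1_mul_mU2_mul_ratioU1U2 (u1 : U1) (u2 : U2) :
    mU1 qU u1 * mU2 qU u2 * ratioU1U2 qU u1 u2 = qU.p (u1, u2) := by
  rcases eq_or_ne (mU1 qU u1 * mU2 qU u2) 0 with h | h
  · have hp : qU.p (u1, u2) = 0 := by
      refine le_antisymm ?_ (qU.nonneg _)
      rcases mul_eq_zero.mp h with h | h
      · exact (single_le_sum (f := fun v => qU.p (u1, v)) (fun _ _ => qU.nonneg _)
          (mem_univ u2)).trans h.le
      · exact (single_le_sum (f := fun u => qU.p (u, u2)) (fun _ _ => qU.nonneg _)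
          (mem_univ u1)).trans h.le
    rw [h, zero_mul, hp]
  · exact mul_div_cancel₀ _ h

/-- The summand of the Marton bound, with each `2 ^ i_q` written as the density ratio it
stands for. -/
lemma qBC_mul_inv_eq (M1 M2 : ℕ) {J1 J2 : ℕ} (hJ1 : 0 < J1) (hJ2 : 0 < J2) (u1 : U1) (u2 : U2)
    (y1 : Y1) (y2 : Y2) :
    qBC qU f W u1 u2 y1 y2 *
        ((1 + ((J1 : ℝ) * (J2 : ℝ))⁻¹ * (2 : ℝ) ^ (iU1U2 qU u1 u2)) *
          (1 + (M1 : ℝ) * (J1 : ℝ) * (2 : ℝ) ^ (-(iU1Y1 qU f W u1 y1))) *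
          (1 + (M2 : ℝ) * (J2 : ℝ) * (2 : ℝ) ^ (-(iU2Y2 qU f W u2 y2))))⁻¹ =
      J1 * J2 * (mU1 qU u1 * (mU2 qU u2 * ((W (f u1 u2)).p (y1, y2) *
        (ratioU1U2 qU u1 u2 * ratioU1Y1 qU f W u1 y1 * ratioU2Y2 qU f W u2 y2 /
          ((ratioU1U2 qU u1 u2 + J1 * J2) * (ratioU1Y1 qU f W u1 y1 + M1 * J1) *
            (ratioU2Y2 qU f W u2 y2 + M2 * J2)))))) := by
  have hq : qBC qU f W u1 u2 y1 y2 =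
      mU1 qU u1 * mU2 qU u2 * ratioU1U2 qU u1 u2 * (W (f u1 u2)).p (y1, y2) := by
    rw [mU1_mul_mU2_mul_ratioU1U2, qBC]
  rcases (qBC_nonneg qU f W u1 u2 y1 y2).eq_or_lt with h0 | hpos
  · have hzero : mU1 qU u1 * mU2 qU u2 * ratioU1U2 qU u1 u2 * (W (f u1 u2)).p (y1, y2) = 0 := by
      rw [← hq, h0]
    simp only [mul_eq_zero] at hzero
    rw [← h0, zero_mul]
    rcases hzero with ((h | h) | h) | h <;> simp [h]
  obtain ⟨hr, hs1, hs2⟩ := ratios_pos_of_qBC_pos qU f W hpos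
  have hJ1' : (0 : ℝ) < J1 := by exact_mod_cast hJ1
  have hJ2' : (0 : ℝ) < J2 := by exact_mod_cast hJ2
  rw [iU1U2, iU1Y1, iU2Y2, Real.rpow_neg zero_le_two, Real.rpow_neg zero_le_two,
    ← ratioU1U2, ← ratioU1Y1, ← ratioU2Y2, Real.rpow_logb zero_lt_two one_lt_two.ne' hr,
    Real.rpow_logb zero_lt_two one_lt_two.ne' hs1, Real.rpow_logb zero_lt_two one_lt_two.ne' hs2,
    hq]
  field_simp
  ring

end InformationDensities

lemma pCorrectBCp_eq (M1 M2 : ℕ) (W : X → FinPMF (Y1 × Y2)) (enc : Fin M1 × Fin M2 → FinPMF X)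
    (dec1 : Y1 → FinPMF (Fin M1)) (dec2 : Y2 → FinPMF (Fin M2)) :
    pCorrectBCp M1 M2 W enc dec1 dec2 = ((M1 : ℝ) * M2)⁻¹ * ∑ a₁, ∑ a₂, ∑ x, ∑ y₁, ∑ y₂,
      (enc (a₁, a₂)).p x * (W x).p (y₁, y₂) * (dec1 y₁).p a₁ * (dec2 y₂).p a₂ := by
  simp only [pCorrectBCp, mul_sum, one_div, mul_assoc]

lemma le_inv_mul_sum_sum {m n : ℕ} [NeZero m] [NeZero n] {a : ℝ} {F : Fin m → Fin n → ℝ}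
    (h : ∀ i j, a ≤ F i j) : a ≤ ((m : ℝ) * n)⁻¹ * ∑ i, ∑ j, F i j := by
  have hmn : (0 : ℝ) < m * n := mul_pos (Nat.cast_pos.mpr (Nat.pos_of_neZero m))
    (Nat.cast_pos.mpr (Nat.pos_of_neZero n))
  rw [le_inv_mul_iff₀ hmn]
  calc (m : ℝ) * n * a = ∑ _i : Fin m, ∑ _j : Fin n, a := by simp [mul_assoc]
    _ ≤ ∑ i, ∑ j, F i j := sum_le_sum fun i _ => sum_le_sum fun j _ => h i j

section MartonCode

variable (qU : FinPMF (U1 × U2)) (f : U1 → U2 → X) (W : X → FinPMF (Y1 × Y2))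
  {M1 M2 J1 J2 : ℕ} [NeZero M1] [NeZero M2] [NeZero J1] [NeZero J2] [DecidableEq X]

lemma marton_bound_le_codebookMean_success (a₁ : Fin M1) (a₂ : Fin M2) :
    ∑ u1 : U1, ∑ u2 : U2, ∑ y1 : Y1, ∑ y2 : Y2,
        qBC qU f W u1 u2 y1 y2 *
        ((1 + ((J1 : ℝ) * (J2 : ℝ))⁻¹ * (2 : ℝ) ^ (iU1U2 qU u1 u2)) *
         (1 + (M1 : ℝ) * (J1 : ℝ) * (2 : ℝ) ^ (-(iU1Y1 qU f W u1 y1))) *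
         (1 + (M2 : ℝ) * (J2 : ℝ) * (2 : ℝ) ^ (-(iU2Y2 qU f W u2 y2))))⁻¹ ≤
      codebookMean (mU1 qU) fun c₁ : Fin M1 × Fin J1 → U1 =>
        codebookMean (mU2 qU) fun c₂ : Fin M2 × Fin J2 → U2 =>
          ∑ x, ∑ y₁, ∑ y₂, (likelihoodEncoder (ratioU1U2 qU) f c₁ c₂ (a₁, a₂)).p x *
            (W x).p (y₁, y₂) * (likelihoodDecoder (ratioU1Y1 qU f W) c₁ y₁).p a₁ *
            (likelihoodDecoder (ratioU2Y2 qU f W) c₂ y₂).p a₂ := by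
  have hJ1 : 0 < J1 := Nat.pos_of_neZero J1
  have hJ2 : 0 < J2 := Nat.pos_of_neZero J2
  calc _ = ∑ _j₁ : Fin J1, ∑ _j₂ : Fin J2, ∑ y₁, ∑ y₂, ∑ u1, mU1 qU u1 * ∑ u2, mU2 qU u2 *
        ((W (f u1 u2)).p (y₁, y₂) *
          (ratioU1U2 qU u1 u2 * ratioU1Y1 qU f W u1 y₁ * ratioU2Y2 qU f W u2 y₂ /
            ((ratioU1U2 qU u1 u2 + J1 * J2) * (ratioU1Y1 qU f W u1 y₁ + M1 * J1) *
              (ratioU2Y2 qU f W u2 y₂ + M2 * J2)))) := by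
        simp only [qBC_mul_inv_eq qU f W M1 M2 hJ1 hJ2]
        rw [sum_comm₂₂]
        simp only [← mul_sum, sum_const, card_univ, Fintype.card_fin, nsmul_eq_mul]
        ring
    _ ≤ ∑ j₁, ∑ j₂, ∑ y₁, ∑ y₂, codebookMean (mU1 qU) fun c₁ : Fin M1 × Fin J1 → U1 =>
          codebookMean (mU2 qU) fun c₂ : Fin M2 × Fin J2 → U2 =>
            (W (f (c₁ (a₁, j₁)) (c₂ (a₂, j₂)))).p (y₁, y₂) *
              (ratioU1U2 qU (c₁ (a₁, j₁)) (c₂ (a₂, j₂)) /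
                  (∑ k₁, ∑ k₂, ratioU1U2 qU (c₁ (a₁, k₁)) (c₂ (a₂, k₂))) *
                (ratioU1Y1 qU f W (c₁ (a₁, j₁)) y₁ / ∑ i, ratioU1Y1 qU f W (c₁ i) y₁) *
                (ratioU2Y2 qU f W (c₂ (a₂, j₂)) y₂ / ∑ i, ratioU2Y2 qU f W (c₂ i) y₂)) := by
        gcongr with j₁ _ j₂ _ y₁ _ y₂ _
        have jensen := sum_le_codebookMean_codebookMean_div_mul_div_mul_div (mU1_nonneg qU)
          (mU2_nonneg qU) (sum_mU1 qU) (sum_mU2 qU) (Prod.mk_right_injective a₁)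
          (Prod.mk_right_injective a₂) j₁ j₂ (w := fun u v => (W (f u v)).p (y₁, y₂))
          (fun _ _ => (W _).nonneg _) (ratioU1U2_nonneg qU) (fun u => ratioU1Y1_nonneg qU f W u y₁)
          (fun v => ratioU2Y2_nonneg qU f W v y₂) (sum_mU1_mul_ratioU1U2_le_one qU)
          (sum_mU2_mul_ratioU1U2_le_one qU) (sum_mU1_mul_ratioU1Y1_le_one qU f W y₁)
          (sum_mU2_mul_ratioU2Y2_le_one qU f W y₂)
        simpa only [Fintype.card_fin, Fintype.card_prod, Nat.cast_mul] using jensen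
    _ ≤ _ := by
        simp only [← codebookMean_sum]
        exact codebookMean_mono (mU1_nonneg qU) fun c₁ => codebookMean_mono (mU2_nonneg qU)
          fun c₂ => sum_le_likelihoodCode_success (ratioU1U2_nonneg qU) (ratioU1Y1_nonneg qU f W)
            (ratioU2Y2_nonneg qU f W) f W c₁ c₂ a₁ a₂

lemma marton_bound_le_codebookMean_pCorrectBCp :
    ∑ u1 : U1, ∑ u2 : U2, ∑ y1 : Y1, ∑ y2 : Y2,
        qBC qU f W u1 u2 y1 y2 *
        ((1 + ((J1 : ℝ) * (J2 : ℝ))⁻¹ * (2 : ℝ) ^ (iU1U2 qU u1 u2)) *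
         (1 + (M1 : ℝ) * (J1 : ℝ) * (2 : ℝ) ^ (-(iU1Y1 qU f W u1 y1))) *
         (1 + (M2 : ℝ) * (J2 : ℝ) * (2 : ℝ) ^ (-(iU2Y2 qU f W u2 y2))))⁻¹ ≤
      codebookMean (mU1 qU) fun c₁ : Fin M1 × Fin J1 → U1 =>
        codebookMean (mU2 qU) fun c₂ : Fin M2 × Fin J2 → U2 =>
          pCorrectBCp M1 M2 W (likelihoodEncoder (ratioU1U2 qU) f c₁ c₂)
            (likelihoodDecoder (ratioU1Y1 qU f W) c₁) (likelihoodDecoder (ratioU2Y2 qU f W) c₂) := by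
  refine (le_inv_mul_sum_sum fun a₁ a₂ =>
    marton_bound_le_codebookMean_success qU f W a₁ a₂).trans (le_of_eq ?_)
  simp only [pCorrectBCp_eq, codebookMean_const_mul, codebookMean_sum]

end MartonCode

/-- One-shot Marton bound for private messages. -/
theorem oneShot_marton_private (qU : FinPMF (U1 × U2)) (f : U1 → U2 → X)
    (W : X → FinPMF (Y1 × Y2)) (M1 M2 J1 J2 : ℕ)
    (hM1 : 0 < M1) (hM2 : 0 < M2) (hJ1 : 0 < J1) (hJ2 : 0 < J2) :
    ∃ (enc : Fin M1 × Fin M2 → FinPMF X)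
      (dec1 : Y1 → FinPMF (Fin M1)) (dec2 : Y2 → FinPMF (Fin M2)),
      pCorrectBCp M1 M2 W enc dec1 dec2 ≥
        ∑ u1 : U1, ∑ u2 : U2, ∑ y1 : Y1, ∑ y2 : Y2,
          qBC qU f W u1 u2 y1 y2 *
          ((1 + ((J1 : ℝ) * (J2 : ℝ))⁻¹ * (2 : ℝ) ^ (iU1U2 qU u1 u2)) *
           (1 + (M1 : ℝ) * (J1 : ℝ) * (2 : ℝ) ^ (-(iU1Y1 qU f W u1 y1))) *
           (1 + (M2 : ℝ) * (J2 : ℝ) * (2 : ℝ) ^ (-(iU2Y2 qU f W u2 y2))))⁻¹ := by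
  classical
  have : NeZero M1 := ⟨hM1.ne'⟩
  have : NeZero M2 := ⟨hM2.ne'⟩
  have : NeZero J1 := ⟨hJ1.ne'⟩
  have : NeZero J2 := ⟨hJ2.ne'⟩
  obtain ⟨c₁, hc₁⟩ := exists_le_of_le_codebookMean (sum_mU1 qU) (mU1_nonneg qU)
    (marton_bound_le_codebookMean_pCorrectBCp qU f W (M1 := M1) (M2 := M2) (J1 := J1) (J2 := J2))
  obtain ⟨c₂, hc₂⟩ := exists_le_of_le_codebookMean (sum_mU2 qU) (mU2_nonneg qU) hc₁
  exact ⟨_, _, _, hc₂⟩
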